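/- If (x*, α*) is a global minimizer of (P2) (feasible and minimizing g over the feasible set), then x*_k > 0 for every k ∈ Fin K. -/
import Mathlib


open Finset

/-- Objective of problem (P2). -/
noncomputable def objP2 (K : ℕ) (h : Fin K → ℝ) (σ2 : ℝ)
    (x : Fin K → ℝ) (α : ℝ) : ℝ :=
  ∑ k, (h k) ^ 2 * x k - 2 * ∑ k, h k * Real.sqrt (x k) + α * σ2

/-- Feasibility for problem (P2). -/
def FeasP2 (K : ℕ) (b : Fin K → ℝ) (η Pmax : ℝ)
    (x : Fin K → ℝ) (α : ℝ) : Prop :=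
  (∑ k, b k * x k) ≥ η * α ∧ (∀ k, 0 ≤ x k ∧ x k ≤ Pmax * α) ∧ 0 < α

theorem stmt_6 (K : ℕ) (hK : 1 ≤ K) (h b : Fin K → ℝ)
    (hh : ∀ k, 0 < h k) (hb : ∀ k, 0 < b k)
    (σ2 η Pmax : ℝ) (hσ : 0 < σ2) (hη : 0 < η) (hP : 0 < Pmax)
    (x : Fin K → ℝ) (α : ℝ)
    (hfeas : FeasP2 K b η Pmax x α)
    (hmin : ∀ (y : Fin K → ℝ) (β : ℝ), FeasP2 K b η Pmax y β →
      objP2 K h σ2 x α ≤ objP2 K h σ2 y β) :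
    ∀ k, 0 < x k := by
  intro k0
  by_contra hneg
  obtain ⟨hsum, hbox, hα⟩ := hfeas
  have hx0 : x k0 = 0 := le_antisymm (not_lt.mp hneg) (hbox k0).1
  have hhk : 0 < h k0 := hh k0
  set ε : ℝ := min (Pmax * α) ((h k0)⁻¹ ^ 2) with hεdef
  have hεpos : 0 < ε := lt_min (by positivity) (by positivity)
  set y := Function.update x k0 ε with hy
  have hfeas' : FeasP2 K b η Pmax y α := by
    refine ⟨le_trans hsum (Finset.sum_le_sum ?_), ?_, hα⟩
    · intro k _
      by_cases hk : k = k0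
      · subst hk
        simp only [hy, Function.update_self, hx0, mul_zero]
        exact (mul_pos (hb _) hεpos).le
      · simp [hy, Function.update_of_ne hk]
    · intro k
      by_cases hk : k = k0
      · subst hk
        simp only [hy, Function.update_self]
        exact ⟨hεpos.le, min_le_left _ _⟩
      · simpa [hy, Function.update_of_ne hk] using hbox k
  have hle := hmin y α hfeas'
  -- sum differences
  have hd1 : ∑ k, (h k) ^ 2 * y k - ∑ k, (h k) ^ 2 * x k = (h k0) ^ 2 * ε := by
    rw [← Finset.sum_sub_distrib]
    rw [Finset.sum_eq_single_of_mem k0 (Finset.mem_univ k0)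
      (fun k _ hk => by simp [hy, Function.update_of_ne hk])]
    simp [hy, hx0]
  have hd2 : ∑ k, h k * Real.sqrt (y k) - ∑ k, h k * Real.sqrt (x k)
      = h k0 * Real.sqrt ε := by
    rw [← Finset.sum_sub_distrib]
    rw [Finset.sum_eq_single_of_mem k0 (Finset.mem_univ k0)
      (fun k _ hk => by simp [hy, Function.update_of_ne hk])]
    simp [hy, hx0]
  have hobj : objP2 K h σ2 y α - objP2 K h σ2 x α
      = (h k0) ^ 2 * ε - 2 * (h k0 * Real.sqrt ε) := by
    unfold objP2
    have := hd1; have := hd2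
    nlinarith [hd1, hd2]
  have hs1 : Real.sqrt ε ≤ (h k0)⁻¹ := by
    have : Real.sqrt ε ≤ Real.sqrt ((h k0)⁻¹ ^ 2) :=
      Real.sqrt_le_sqrt (min_le_right _ _)
    rwa [Real.sqrt_sq (by positivity)] at this
  have hspos : 0 < Real.sqrt ε := Real.sqrt_pos.mpr hεpos
  have hprod : h k0 * Real.sqrt ε ≤ 1 := by
    calc h k0 * Real.sqrt ε ≤ h k0 * (h k0)⁻¹ :=
          mul_le_mul_of_nonneg_left hs1 hhk.le
      _ = 1 := mul_inv_cancel₀ hhk.ne'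
  have hεsq : Real.sqrt ε ^ 2 = ε := Real.sq_sqrt hεpos.le
  have : objP2 K h σ2 y α - objP2 K h σ2 x α < 0 := by
    rw [hobj]
    nlinarith [mul_pos hhk hspos]
  linarith
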